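/- Let M=(S,A,P) be an RMDP and c : S → {0,…,d} a priority function. If m > 0 and there exists a pure memoryless agent policy σ such that Val^{s,σ}_M(Parity(c)) ≥ m for every state s ∈ S, then Val^{s,σ}_M(Parity(c)) = 1 for every state s ∈ S. -/

import Mathlib

open scoped BigOperators Classical ENNReal

open MeasureTheory

/-- A robust MDP over finite state set `S` and finite action set `A`.
Distributions are represented as real-valued probability vectors `S → ℝ`. -/
structure RMDP (S A : Type) [Fintype S] [Fintype A] where
  /-- available actions at each state -/
  Act : S → Finset A
  Act_nonempty : ∀ s, (Act s).Nonempty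
  /-- the uncertainty sets -/
  P : S → A → Set (S → ℝ)
  P_prob : ∀ s, ∀ a ∈ Act s, ∀ p ∈ P s a, (∀ t, 0 ≤ p t) ∧ ∑ t, p t = 1
  P_nonempty : ∀ s, ∀ a ∈ Act s, (P s a).Nonempty
  P_compact : ∀ s, ∀ a ∈ Act s, IsCompact (P s a)

variable {S A : Type} [Fintype S] [Nonempty S] [Fintype A]
  [MeasurableSpace S] [DiscreteMeasurableSpace S]
  [MeasurableSpace A] [DiscreteMeasurableSpace A]

/-- An agent policy: given a history and the current state, a probability
distribution over the available actions. -/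
structure AgentPolicy (M : RMDP S A) where
  toFun : List (S × A) → S → A → ℝ
  nonneg : ∀ h s a, 0 ≤ toFun h s a
  sum_one : ∀ h s, ∑ a, toFun h s a = 1
  mem_act : ∀ h s a, toFun h s a ≠ 0 → a ∈ M.Act s

/-- An environment policy: given a history, the current state and the chosen
action, a distribution from the uncertainty set. -/
structure EnvPolicy (M : RMDP S A) where
  toFun : List (S × A) → S → A → S → ℝ
  mem : ∀ h s, ∀ a ∈ M.Act s, toFun h s a ∈ M.P s a

/-- A pure memoryless agent policy deterministically picks an action
depending only on the current state. -/
def AgentPolicy.PureMemoryless {M : RMDP S A} (σ : AgentPolicy M) : Prop :=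
  ∃ f : S → A, ∀ h s a, σ.toFun h s a = if a = f s then 1 else 0

/-- A pure memoryless environment policy picks the transition distribution
depending only on the current state and action. -/
def EnvPolicy.PureMemoryless {M : RMDP S A} (ρ : EnvPolicy M) : Prop :=
  ∃ g : S → A → S → ℝ, ∀ h s a, ρ.toFun h s a = g s a

/-- A run from a fixed initial state `s₀` is encoded by the sequence
`ω = (a₀, s₁), (a₁, s₂), …` of pairs consisting of the action chosen and the
state reached at each step. -/
abbrev Run (S A : Type) : Type := ℕ → A × S

/-- The sequence `s₀, s₁, s₂, …` of states visited by the run `ω` started at `s₀`. -/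
def stateSeq (s₀ : S) (ω : Run S A) : ℕ → S
  | 0 => s₀
  | n + 1 => (ω n).2

/-- The history `h_n = s₀, a₀, …, s_{n-1}, a_{n-1}` of the run `ω` started at `s₀`. -/
def histSeq (s₀ : S) (ω : Run S A) : ℕ → List (S × A)
  | 0 => []
  | n + 1 => histSeq s₀ ω n ++ [(stateSeq s₀ ω n, (ω n).1)]

/-- The probability, under policies `σ` and `ρ` with initial state `s₀`, of the
cylinder determined by the first `n` action/state pairs of the run `ω`. -/
noncomputable def prefixProb (M : RMDP S A) (σ : AgentPolicy M) (ρ : EnvPolicy M)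
    (s₀ : S) (ω : Run S A) : ℕ → ℝ
  | 0 => 1
  | n + 1 =>
      prefixProb M σ ρ s₀ ω n *
        σ.toFun (histSeq s₀ ω n) (stateSeq s₀ ω n) ((ω n).1) *
        ρ.toFun (histSeq s₀ ω n) (stateSeq s₀ ω n) ((ω n).1) (stateSeq s₀ ω (n + 1))

/-- `μ` is the probability measure `ℙ^{σ,ρ}_M(s₀)` on runs induced by the
policies `σ` and `ρ` and initial state `s₀`: it is a probability measure whose
cylinder probabilities are the ones prescribed by sampling
`a_i ∼ σ(h_i, s_i)` and `s_{i+1} ∼ ρ(h_i, s_i, a_i)` at every step. -/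
def IsRunMeasure (M : RMDP S A) (σ : AgentPolicy M) (ρ : EnvPolicy M) (s₀ : S)
    (μ : Measure (Run S A)) : Prop :=
  IsProbabilityMeasure μ ∧
    ∀ (w : Run S A) (n : ℕ),
      μ {ω : Run S A | ∀ i < n, ω i = w i} = ENNReal.ofReal (prefixProb M σ ρ s₀ w n)

/-- `Parity(c)`: the set of runs such that the maximum priority of the states
visited infinitely often is even. -/
def paritySet (c : S → ℕ) (s₀ : S) : Set (Run S A) :=
  {ω | Even (sSup {k : ℕ | ∃ t : S, c t = k ∧ ∃ᶠ i in Filter.atTop, stateSeq s₀ ω i = t})}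

/-- `Val^{s,σ}_M(Parity(c)) = inf_ρ ℙ^{σ,ρ}_M(s)[Parity(c)]`. -/
noncomputable def parityValFor (M : RMDP S A) (c : S → ℕ) (σ : AgentPolicy M) (s : S) :
    ℝ≥0∞ :=
  ⨅ ρ : EnvPolicy M, ⨅ μ : {μ : Measure (Run S A) // IsRunMeasure M σ ρ s μ},
    μ.1 (paritySet c s)

/-- `Val^{s}_M(Parity(c)) = sup_σ inf_ρ ℙ^{σ,ρ}_M(s)[Parity(c)]`. -/
noncomputable def parityVal (M : RMDP S A) (c : S → ℕ) (s : S) : ℝ≥0∞ :=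
  ⨆ σ : AgentPolicy M, parityValFor M c σ s

/-!
Because `σ` is memoryless, conditioning a run measure on a prefix cylinder `C` and dropping the
prefix yields a run measure for the same `σ` from the last state of the prefix, against a shifted
environment policy. Parity is invariant under dropping a prefix, so the hypothesis gives
`m * μ C ≤ μ (C ∩ Parity)` for every cylinder `C`. Cylinders generate the σ-algebra of runs, and
approximating the complement of `Parity` by finite unions of cylinders shows that it is null.
Run measures exist by the Ionescu-Tulcea theorem, so the value is an infimum of ones.
-/

section Sequences

variable {X : Type*}

def prefixCylinder (w : ℕ → X) (n : ℕ) : Set (ℕ → X) := {ω | ∀ i < n, ω i = w i}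

@[simp] lemma prefixCylinder_zero (w : ℕ → X) : prefixCylinder w 0 = Set.univ := by
  simp [prefixCylinder]

lemma prefixCylinder_succ_eq_preimage (w : ℕ → X) (n : ℕ) :
    prefixCylinder w (n + 1) =
      Preorder.frestrictLe (π := fun _ => X) n ⁻¹' {Preorder.frestrictLe n w} := by
  ext ω
  simp [prefixCylinder, Preorder.frestrictLe, funext_iff]

lemma prefixCylinder_succ_succ_eq_preimage (w : ℕ → X) (n : ℕ) :
    prefixCylinder w (n + 2) = (fun ω => (Preorder.frestrictLe n ω, ω (n + 1))) ⁻¹'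
      ({Preorder.frestrictLe n w} ×ˢ {w (n + 1)} : Set ((Π _ : Finset.Iic n, X) × X)) := by
  rw [Set.mk_preimage_prod, ← prefixCylinder_succ_eq_preimage]
  ext ω
  simp [prefixCylinder, Nat.lt_succ_iff, Nat.le_succ_iff, or_imp, forall_and]

def shiftSeq (n : ℕ) (ω : ℕ → X) : ℕ → X := fun i => ω (n + i)

lemma prefixCylinder_inter_preimage_shiftSeq (w v : ℕ → X) (n k : ℕ) :
    prefixCylinder w n ∩ shiftSeq n ⁻¹' prefixCylinder v k =
      prefixCylinder (fun i => if i < n then w i else v (i - n)) (n + k) := by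
  ext ω
  simp only [prefixCylinder, shiftSeq, Set.mem_inter_iff, Set.mem_preimage, Set.mem_ofPred_eq]
  constructor
  · rintro ⟨hw, hv⟩ i hi
    split_ifs with hin
    · exact hw i hin
    · simpa [Nat.add_sub_cancel' (not_lt.1 hin)] using hv (i - n) (by omega)
  · intro h
    refine ⟨fun i hi => by simpa [hi] using h i (by omega), fun i hi => ?_⟩
    simpa using h (n + i) (by omega)

lemma frequently_atTop_const_add_iff (n : ℕ) (p : ℕ → Prop) :
    (∃ᶠ i in Filter.atTop, p (n + i)) ↔ ∃ᶠ i in Filter.atTop, p i := by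
  simp_rw [add_comm n]
  rw [← Filter.frequently_map (m := fun i => i + n), Filter.map_add_atTop_eq_nat]

lemma measurable_shiftSeq [MeasurableSpace X] (n : ℕ) : Measurable (shiftSeq (X := X) n) :=
  measurable_pi_lambda _ fun i => measurable_pi_apply (n + i)

variable [MeasurableSpace X] [MeasurableSingletonClass X]

lemma measurableSet_prefixCylinder (w : ℕ → X) (n : ℕ) :
    MeasurableSet (prefixCylinder w n) := by
  cases n with
  | zero => simp
  | succ n =>
    rw [prefixCylinder_succ_eq_preimage]
    exact Preorder.measurable_frestrictLe _ (measurableSet_singleton _)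

variable [Countable X] {μ : Measure (ℕ → X)} {E : Set (ℕ → X)} {m : ℝ≥0∞}

lemma le_measure_inter_of_mem_measurableCylinders
    (h : ∀ w n, m * μ (prefixCylinder w n) ≤ μ (prefixCylinder w n ∩ E))
    {t : Set (ℕ → X)} (ht : t ∈ measurableCylinders fun _ : ℕ => X) :
    m * μ t ≤ μ (t ∩ E) := by
  rw [measurableCylinders_nat] at ht
  simp only [Set.mem_iUnion, Set.mem_singleton_iff] at ht
  obtain ⟨a, T, -, rfl⟩ := ht
  let r := Preorder.frestrictLe (π := fun _ => X) a
  have hfib (b : Π _ : Finset.Iic a, X) : MeasurableSet (r ⁻¹' {b}) :=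
    Preorder.measurable_frestrictLe a (measurableSet_singleton b)
  have hfib_le (b : Π _ : Finset.Iic a, X) : m * μ (r ⁻¹' {b}) ≤ μ.restrict E (r ⁻¹' {b}) := by
    rw [Measure.restrict_apply (hfib b)]
    rcases (r ⁻¹' {b}).eq_empty_or_nonempty with hb | ⟨w, rfl⟩
    · simp [hb]
    · rw [← prefixCylinder_succ_eq_preimage]
      exact h w (a + 1)
  calc m * μ (cylinder (Finset.Iic a) T)
      = ∑' b : T, m * μ (r ⁻¹' {(b : Π _ : Finset.Iic a, X)}) := by
        rw [ENNReal.tsum_mul_left, tsum_measure_preimage_singleton (Set.to_countable T)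
          fun b _ => hfib b]
        rfl
    _ ≤ ∑' b : T, μ.restrict E (r ⁻¹' {(b : Π _ : Finset.Iic a, X)}) :=
        ENNReal.tsum_le_tsum fun b => hfib_le b
    _ = μ (cylinder (Finset.Iic a) T ∩ E) := by
        rw [tsum_measure_preimage_singleton (Set.to_countable T) fun b _ => hfib b]
        exact Measure.restrict_apply (MeasurableSet.cylinder _ (Set.to_countable T).measurableSet)

theorem measure_eq_one_of_forall_le_measure_prefixCylinder_inter [IsProbabilityMeasure μ]
    (hE : MeasurableSet E) (hm : 0 < m)
    (h : ∀ w n, m * μ (prefixCylinder w n) ≤ μ (prefixCylinder w n ∩ E)) : μ E = 1 := by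
  obtain ⟨w⟩ : Nonempty (ℕ → X) := nonempty_of_isProbabilityMeasure μ
  have hm1 : m ≤ 1 := by simpa using (h w 0).trans prob_le_one
  have hsmall : ∀ δ > 0, m * μ Eᶜ ≤ δ + δ := by
    intro δ hδ
    obtain ⟨t, ht, htE⟩ := exists_measure_symmDiff_lt_of_generateFrom_isSetRing (μ := μ)
      isSetRing_measurableCylinders
      ⟨{Set.univ}, Set.countable_singleton _,
        by simpa using univ_mem_measurableCylinders (fun _ : ℕ => X), by simp⟩
      generateFrom_measurableCylinders.symm hE.compl hδ
    calc m * μ Eᶜ ≤ m * (μ t + δ) := by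
          gcongr
          calc μ Eᶜ ≤ μ (t ∪ symmDiff t Eᶜ) := measure_mono fun ω hω => by
                  by_cases ht : ω ∈ t <;> simp_all [Set.mem_symmDiff]
            _ ≤ μ t + δ := (measure_union_le _ _).trans (by gcongr)
      _ = m * μ t + m * δ := mul_add _ _ _
      _ ≤ μ (t ∩ E) + 1 * δ := by
          gcongr
          exact le_measure_inter_of_mem_measurableCylinders h ht
      _ ≤ δ + δ := by
          rw [one_mul]
          gcongr
          refine (measure_mono fun ω hω => ?_).trans htE.le
          simp_all [Set.mem_symmDiff]
  have hzero : m * μ Eᶜ = 0 := by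
    refine le_antisymm (ENNReal.le_of_forall_pos_le_add fun ε hε _ => ?_) bot_le
    simpa [ENNReal.add_halves] using
      hsmall (ε / 2) (ENNReal.half_pos (ENNReal.coe_ne_zero.2 hε.ne'))
  rw [← prob_compl_eq_zero_iff hE]
  exact (mul_eq_zero.1 hzero).resolve_left hm.ne'

end Sequences

section Runs

variable {S A : Type} {s₀ : S} {ω ω' : Run S A} {n : ℕ}

lemma stateSeq_congr (h : ∀ i < n, ω i = ω' i) : ∀ j ≤ n, stateSeq s₀ ω j = stateSeq s₀ ω' j
  | 0, _ => rfl
  | j + 1, hj => by simp [stateSeq, h j hj]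

lemma histSeq_congr (h : ∀ i < n, ω i = ω' i) : ∀ j ≤ n, histSeq s₀ ω j = histSeq s₀ ω' j
  | 0, _ => rfl
  | j + 1, hj => by
    simp [histSeq, histSeq_congr h j (by omega), stateSeq_congr h j (by omega), h j hj]

lemma stateSeq_shiftSeq (k : ℕ) :
    stateSeq (stateSeq s₀ ω n) (shiftSeq n ω) k = stateSeq s₀ ω (n + k) := by
  cases k <;> rfl

lemma histSeq_add (k : ℕ) :
    histSeq s₀ ω (n + k) = histSeq s₀ ω n ++ histSeq (stateSeq s₀ ω n) (shiftSeq n ω) k := by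
  induction k with
  | zero => simp [histSeq]
  | succ k ih =>
    rw [← add_assoc, histSeq, ih, histSeq, stateSeq_shiftSeq, List.append_assoc]
    rfl

lemma shiftSeq_mem_paritySet_iff (c : S → ℕ) :
    shiftSeq n ω ∈ paritySet c (stateSeq s₀ ω n) ↔ ω ∈ paritySet c s₀ := by
  have hfreq (t : S) : (∃ᶠ i in Filter.atTop, stateSeq s₀ ω (n + i) = t) ↔
      ∃ᶠ i in Filter.atTop, stateSeq s₀ ω i = t :=
    frequently_atTop_const_add_iff n (fun i => stateSeq s₀ ω i = t)
  simp only [paritySet, Set.mem_ofPred_eq, stateSeq_shiftSeq, hfreq]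

def padRun (x : Π _ : Finset.Iic n, A × S) : Run S A :=
  fun i => x ⟨min i n, Finset.mem_Iic.2 (min_le_right i n)⟩

lemma padRun_frestrictLe (w : Run S A) (n : ℕ) :
    ∀ i < n + 1, padRun (Preorder.frestrictLe n w) i = w i := by
  intro i hi
  simp [padRun, Preorder.frestrictLe, Nat.min_eq_left (Nat.lt_succ_iff.1 hi)]

variable [MeasurableSpace S] [MeasurableSpace A]

lemma measurable_stateSeq (s₀ : S) : ∀ i, Measurable fun ω : Run S A => stateSeq s₀ ω i
  | 0 => measurable_const
  | i + 1 => measurable_snd.comp (measurable_pi_apply i)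

lemma measurableSet_paritySet [Finite S] [MeasurableSingletonClass S] (c : S → ℕ) (s₀ : S) :
    MeasurableSet (paritySet (A := A) c s₀) := by
  have hvisited : Measurable fun (ω : Run S A) t => ∃ᶠ i in Filter.atTop, stateSeq s₀ ω i = t := by
    refine measurable_pi_lambda _ fun t => measurableSet_setOfPred.1 ?_
    have : {ω : Run S A | ∃ᶠ i in Filter.atTop, stateSeq s₀ ω i = t} =
        Filter.limsup (fun i => {ω | stateSeq s₀ ω i = t}) Filter.atTop := by
      ext
      rw [Filter.mem_limsup_iff_frequently_mem]
      rfl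
    rw [this]
    exact .measurableSet_limsup fun i => measurable_stateSeq s₀ i (measurableSet_singleton t)
  exact hvisited (t := {x | Even (sSup {k | ∃ t, c t = k ∧ x t})})
    (Set.to_countable _).measurableSet

end Runs

section Steps

variable {S A : Type} [Fintype S] [Fintype A] {M : RMDP S A}

def AgentPolicy.Memoryless (σ : AgentPolicy M) : Prop :=
  ∀ h h' s, σ.toFun h s = σ.toFun h' s

lemma AgentPolicy.PureMemoryless.memoryless {σ : AgentPolicy M} (hσ : σ.PureMemoryless) :
    σ.Memoryless := by
  obtain ⟨f, hf⟩ := hσ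
  intro h h' s
  funext a
  rw [hf, hf]

def EnvPolicy.shift (ρ : EnvPolicy M) (H : List (S × A)) : EnvPolicy M :=
  ⟨fun h => ρ.toFun (H ++ h), fun h => ρ.mem (H ++ h)⟩

noncomputable def stepProb (σ : AgentPolicy M) (ρ : EnvPolicy M) (h : List (S × A)) (s : S)
    (x : A × S) : ℝ :=
  σ.toFun h s x.1 * ρ.toFun h s x.1 x.2

variable (σ : AgentPolicy M) (ρ : EnvPolicy M)

lemma stepProb_nonneg (h : List (S × A)) (s : S) (x : A × S) : 0 ≤ stepProb σ ρ h s x := by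
  by_cases hx : σ.toFun h s x.1 = 0
  · simp [stepProb, hx]
  · exact mul_nonneg (σ.nonneg ..)
      ((M.P_prob _ _ (σ.mem_act _ _ _ hx) _ (ρ.mem _ _ _ (σ.mem_act _ _ _ hx))).1 _)

lemma sum_stepProb (h : List (S × A)) (s : S) : ∑ x, stepProb σ ρ h s x = 1 := by
  simp only [stepProb, Fintype.sum_prod_type, ← Finset.mul_sum]
  rw [← σ.sum_one h s]
  refine Finset.sum_congr rfl fun a _ => ?_
  by_cases ha : σ.toFun h s a = 0
  · simp [ha]
  · rw [(M.P_prob _ _ (σ.mem_act _ _ _ ha) _ (ρ.mem _ _ _ (σ.mem_act _ _ _ ha))).2, mul_one]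

variable (s₀ : S)

lemma prefixProb_succ (ω : Run S A) (n : ℕ) :
    prefixProb M σ ρ s₀ ω (n + 1) =
      prefixProb M σ ρ s₀ ω n * stepProb σ ρ (histSeq s₀ ω n) (stateSeq s₀ ω n) (ω n) := by
  rw [prefixProb, stepProb, mul_assoc]
  rfl

lemma prefixProb_nonneg (ω : Run S A) (n : ℕ) : 0 ≤ prefixProb M σ ρ s₀ ω n := by
  induction n with
  | zero => exact zero_le_one
  | succ n ih => rw [prefixProb_succ]; exact mul_nonneg ih (stepProb_nonneg ..)

variable {σ ρ s₀} {ω ω' : Run S A} {n : ℕ}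

lemma prefixProb_congr (h : ∀ i < n, ω i = ω' i) :
    prefixProb M σ ρ s₀ ω n = prefixProb M σ ρ s₀ ω' n := by
  induction n with
  | zero => rfl
  | succ n ih =>
    rw [prefixProb_succ, prefixProb_succ, ih fun i hi => h i (by omega),
      histSeq_congr h n n.le_succ, stateSeq_congr h n n.le_succ, h n n.lt_succ_self]

lemma prefixProb_add (hσ : σ.Memoryless) (k : ℕ) :
    prefixProb M σ ρ s₀ ω (n + k) = prefixProb M σ ρ s₀ ω n *
      prefixProb M σ (ρ.shift (histSeq s₀ ω n)) (stateSeq s₀ ω n) (shiftSeq n ω) k := by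
  induction k with
  | zero => simp [prefixProb]
  | succ k ih =>
    rw [← add_assoc, prefixProb_succ, ih, prefixProb_succ, mul_assoc, histSeq_add,
      ← stateSeq_shiftSeq, stepProb, stepProb, hσ (histSeq s₀ ω n ++ _) (histSeq _ _ k)]
    rfl

end Steps

section Existence

open ProbabilityTheory

variable {S A : Type} [Fintype S] [Fintype A] {M : RMDP S A} (σ : AgentPolicy M)
  (ρ : EnvPolicy M)

noncomputable def stepPMF (h : List (S × A)) (s : S) : PMF (A × S) :=
  PMF.ofFintype (fun x => ENNReal.ofReal (stepProb σ ρ h s x)) (by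
    rw [← ENNReal.ofReal_sum_of_nonneg fun x _ => stepProb_nonneg σ ρ h s x, sum_stepProb,
      ENNReal.ofReal_one])

lemma stepPMF_apply (h : List (S × A)) (s : S) (x : A × S) :
    stepPMF σ ρ h s x = ENNReal.ofReal (stepProb σ ρ h s x) :=
  PMF.ofFintype_apply ..

variable [MeasurableSpace S] [MeasurableSingletonClass S] [MeasurableSpace A]
  [MeasurableSingletonClass A] (s₀ : S)

noncomputable def stepKernel (n : ℕ) : Kernel (Π _ : Finset.Iic n, A × S) (A × S) :=
  Kernel.ofFunOfCountable fun x =>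
    (stepPMF σ ρ (histSeq s₀ (padRun x) (n + 1)) (stateSeq s₀ (padRun x) (n + 1))).toMeasure

lemma stepKernel_apply (n : ℕ) (x : Π _ : Finset.Iic n, A × S) :
    stepKernel σ ρ s₀ n x =
      (stepPMF σ ρ (histSeq s₀ (padRun x) (n + 1)) (stateSeq s₀ (padRun x) (n + 1))).toMeasure :=
  rfl

instance (n : ℕ) : IsMarkovKernel (stepKernel σ ρ s₀ n) :=
  ⟨fun _ => PMF.toMeasure.isProbabilityMeasure _⟩

noncomputable def runMeasure : Measure (Run S A) :=
  Kernel.trajMeasure (X := fun _ => A × S) (stepPMF σ ρ [] s₀).toMeasure (stepKernel σ ρ s₀)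

instance : IsProbabilityMeasure (runMeasure σ ρ s₀) := by
  unfold runMeasure
  infer_instance

lemma map_frestrictLe_zero_runMeasure :
    (runMeasure σ ρ s₀).map (Preorder.frestrictLe 0) =
      (stepPMF σ ρ [] s₀).toMeasure.map (MeasurableEquiv.piUnique _).symm := by
  rw [runMeasure, Kernel.trajMeasure, Measure.map_comp _ _ (Preorder.measurable_frestrictLe 0),
    Kernel.traj_map_frestrictLe, Kernel.partialTraj_self, Measure.id_comp]

lemma runMeasure_prefixCylinder_one (w : Run S A) :
    runMeasure σ ρ s₀ (prefixCylinder w 1) = ENNReal.ofReal (prefixProb M σ ρ s₀ w 1) := by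
  have hpre : (MeasurableEquiv.piUnique fun _ : Finset.Iic 0 => A × S).symm ⁻¹'
      {Preorder.frestrictLe 0 w} = {w 0} := by
    ext x
    simp [funext_iff, Unique.forall_iff, Preorder.frestrictLe]
    rfl
  rw [prefixCylinder_succ_eq_preimage, ← Measure.map_apply (Preorder.measurable_frestrictLe 0)
    (measurableSet_singleton _), map_frestrictLe_zero_runMeasure,
    Measure.map_apply (MeasurableEquiv.measurable _) (measurableSet_singleton _), hpre,
    PMF.toMeasure_apply_singleton _ _ (measurableSet_singleton _), stepPMF_apply,
    prefixProb_succ, prefixProb, one_mul]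
  rfl

lemma runMeasure_prefixCylinder_add_two (w : Run S A) (n : ℕ) :
    runMeasure σ ρ s₀ (prefixCylinder w (n + 2)) = runMeasure σ ρ s₀ (prefixCylinder w (n + 1)) *
      ENNReal.ofReal (stepProb σ ρ (histSeq s₀ w (n + 1)) (stateSeq s₀ w (n + 1)) (w (n + 1))) := by
  rw [prefixCylinder_succ_succ_eq_preimage, ← Measure.map_apply (by fun_prop)
      ((measurableSet_singleton _).prod (measurableSet_singleton _)), runMeasure,
    ← Kernel.map_frestrictLe_trajMeasure_compProd_eq_map_trajMeasure,
    Measure.compProd_apply_prod (measurableSet_singleton _) (measurableSet_singleton _),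
    lintegral_singleton, Measure.map_apply (Preorder.measurable_frestrictLe n)
      (measurableSet_singleton _), ← prefixCylinder_succ_eq_preimage, ← runMeasure,
    stepKernel_apply, PMF.toMeasure_apply_singleton _ _ (measurableSet_singleton _),
    stepPMF_apply, histSeq_congr (padRun_frestrictLe w n) _ le_rfl,
    stateSeq_congr (padRun_frestrictLe w n) _ le_rfl, mul_comm]

theorem isRunMeasure_runMeasure : IsRunMeasure M σ ρ s₀ (runMeasure σ ρ s₀) := by
  refine ⟨inferInstance, fun w n => ?_⟩
  change runMeasure σ ρ s₀ (prefixCylinder w n) = _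
  induction n with
  | zero => simp [prefixProb]
  | succ n ih =>
    cases n with
    | zero => exact runMeasure_prefixCylinder_one σ ρ s₀ w
    | succ n =>
      rw [runMeasure_prefixCylinder_add_two, ih, prefixProb_succ _ _ _ _ (n + 1),
        ENNReal.ofReal_mul (prefixProb_nonneg ..)]

end Existence

section Conditioning

open ProbabilityTheory

variable {S A : Type} [Fintype S] [Fintype A] [MeasurableSpace S] [MeasurableSpace A]
  {M : RMDP S A} {σ : AgentPolicy M} {ρ : EnvPolicy M} {s₀ : S} {μ : Measure (Run S A)}

lemma IsRunMeasure.measure_prefixCylinder (hμ : IsRunMeasure M σ ρ s₀ μ) (w : Run S A)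
    (n : ℕ) : μ (prefixCylinder w n) = ENNReal.ofReal (prefixProb M σ ρ s₀ w n) :=
  hμ.2 w n

lemma parityValFor_le (c : S → ℕ) (hμ : IsRunMeasure M σ ρ s₀ μ) :
    parityValFor M c σ s₀ ≤ μ (paritySet c s₀) :=
  (iInf_le _ ρ).trans (iInf_le (fun μ : {μ // IsRunMeasure M σ ρ s₀ μ} => μ.1 _) ⟨μ, hμ⟩)

variable [MeasurableSingletonClass S] [MeasurableSingletonClass A]

theorem IsRunMeasure.map_shiftSeq_cond (hσ : σ.Memoryless) (hμ : IsRunMeasure M σ ρ s₀ μ)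
    (w : Run S A) (n : ℕ) (hw : μ (prefixCylinder w n) ≠ 0) :
    IsRunMeasure M σ (ρ.shift (histSeq s₀ w n)) (stateSeq s₀ w n)
      ((μ[|prefixCylinder w n]).map (shiftSeq n)) := by
  have := hμ.1
  have := cond_isProbabilityMeasure hw
  refine ⟨Measure.isProbabilityMeasure_map (measurable_shiftSeq n).aemeasurable, fun v k => ?_⟩
  change Measure.map _ _ (prefixCylinder v k) = _
  rw [Measure.map_apply (measurable_shiftSeq n) (measurableSet_prefixCylinder v k),
    cond_apply (measurableSet_prefixCylinder w n), prefixCylinder_inter_preimage_shiftSeq]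
  set u : Run S A := fun i => if i < n then w i else v (i - n)
  have huw : ∀ i < n, u i = w i := fun i hi => if_pos hi
  have hsu : shiftSeq n u = v := funext fun i => by simp [u, shiftSeq]
  rw [hμ.measure_prefixCylinder u, prefixProb_add hσ, hsu, prefixProb_congr huw,
    histSeq_congr huw n le_rfl, stateSeq_congr huw n le_rfl,
    ENNReal.ofReal_mul (prefixProb_nonneg ..), ← hμ.measure_prefixCylinder, ← mul_assoc,
    ENNReal.inv_mul_cancel hw (measure_ne_top _ _), one_mul]

theorem le_measure_prefixCylinder_inter_paritySet (c : S → ℕ) (hσ : σ.Memoryless) {m : ℝ≥0∞}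
    (h : ∀ s, m ≤ parityValFor M c σ s) (hμ : IsRunMeasure M σ ρ s₀ μ) (w : Run S A) (n : ℕ) :
    m * μ (prefixCylinder w n) ≤ μ (prefixCylinder w n ∩ paritySet c s₀) := by
  have := hμ.1
  by_cases hw : μ (prefixCylinder w n) = 0
  · simp [hw]
  have hpar : prefixCylinder w n ∩ shiftSeq n ⁻¹' paritySet c (stateSeq s₀ w n) =
      prefixCylinder w n ∩ paritySet c s₀ := by
    ext ω
    simp only [Set.mem_inter_iff, Set.mem_preimage]
    refine and_congr_right fun hω => ?_
    rw [← stateSeq_congr hω n le_rfl, shiftSeq_mem_paritySet_iff]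
  calc m * μ (prefixCylinder w n)
      ≤ (μ[|prefixCylinder w n]).map (shiftSeq n) (paritySet c (stateSeq s₀ w n)) *
          μ (prefixCylinder w n) := by
        gcongr
        exact (h _).trans (parityValFor_le c (hμ.map_shiftSeq_cond hσ w n hw))
    _ = μ (prefixCylinder w n ∩ paritySet c s₀) := by
        rw [Measure.map_apply (measurable_shiftSeq n) (measurableSet_paritySet c _),
          cond_apply (measurableSet_prefixCylinder w n), hpar, mul_comm, ← mul_assoc,
          ENNReal.mul_inv_cancel hw (measure_ne_top _ _), one_mul]

end Conditioning

section Value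

variable {S A : Type} [Fintype S] [Fintype A] [MeasurableSpace S] [MeasurableSingletonClass S]
  [MeasurableSpace A] [MeasurableSingletonClass A] {M : RMDP S A}

instance : Nonempty (EnvPolicy M) :=
  ⟨⟨fun _ s a => if ha : a ∈ M.Act s then (M.P_nonempty s a ha).some else 0,
    fun _ s a ha => by simpa [ha] using (M.P_nonempty s a ha).some_mem⟩⟩

lemma parityValFor_eq_one {c : S → ℕ} {σ : AgentPolicy M} {s : S}
    (h : ∀ ρ μ, IsRunMeasure M σ ρ s μ → μ (paritySet c s) = 1) :
    parityValFor M c σ s = 1 := by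
  -- without a run measure the inner infimum would be `⊤`
  have hval (ρ : EnvPolicy M) :
      ⨅ μ : {μ // IsRunMeasure M σ ρ s μ}, μ.1 (paritySet c s) = 1 := by
    have : Nonempty {μ // IsRunMeasure M σ ρ s μ} := ⟨⟨_, isRunMeasure_runMeasure σ ρ s⟩⟩
    simp [fun μ : {μ // IsRunMeasure M σ ρ s μ} => h ρ μ.1 μ.2]
  simp [parityValFor, hval]

theorem measure_paritySet_eq_one {c : S → ℕ} {σ : AgentPolicy M} (hσ : σ.Memoryless)
    {m : ℝ≥0∞} (hm : 0 < m) (h : ∀ s, m ≤ parityValFor M c σ s) {ρ : EnvPolicy M} {s₀ : S}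
    {μ : Measure (Run S A)} (hμ : IsRunMeasure M σ ρ s₀ μ) : μ (paritySet c s₀) = 1 :=
  have := hμ.1
  measure_eq_one_of_forall_le_measure_prefixCylinder_inter (measurableSet_paritySet c s₀) hm
    (le_measure_prefixCylinder_inter_paritySet c hσ h hμ)

end Value

theorem stmt9_general (M : RMDP S A) (c : S → ℕ)
    (m : ℝ≥0∞) (hm : 0 < m) (σ : AgentPolicy M) (hσ : σ.PureMemoryless)
    (h : ∀ s : S, m ≤ parityValFor M c σ s) :
    ∀ s : S, parityValFor M c σ s = 1 := fun _ =>
  parityValFor_eq_one fun _ _ hμ => measure_paritySet_eq_one hσ.memoryless hm h hμ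

theorem stmt9 (M : RMDP S A) (d : ℕ) (c : S → ℕ) (hc : ∀ s, c s ≤ d)
    (m : ℝ≥0∞) (hm : 0 < m) (σ : AgentPolicy M) (hσ : σ.PureMemoryless)
    (h : ∀ s : S, m ≤ parityValFor M c σ s) :
    ∀ s : S, parityValFor M c σ s = 1 :=
  stmt9_general M c m hm σ hσ h
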